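/- Let β ∈ ℝ, b > 0, and let ℓ₀ ≥ 2 be an integer. Then there exist finite constants C₁, C₂ ≥ 0, depending only on β, b and ℓ₀, with the following property: for every c ∈ ℂ, every finite family y_1, …, y_N ∈ ℂ with |y_i| > b for all i, and all x, w ∈ ℂ with |x| < b, |w| < b and x ≠ w, the compensated potential sum Ψ̃(u) := Σ_{i=1}^N (−β·log|u − y_i|) + Re[u·conj(c)] satisfies |Ψ̃(x) − Ψ̃(w)| / |x − w| ≤ |β·Σ_{i=1}^N y_i^{−1} + conj(c)| + C₁·Σ_{ℓ=2}^{ℓ₀−1} |β·Σ_{i=1}^N y_i^{−ℓ}| + C₂·Σ_{i=1}^N b^{ℓ₀} / (|y_i|^{ℓ₀} − b^{ℓ₀}). -/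

import Mathlib

/-!
Up to an additive constant, the compensated potential is the real part of the function
`u ↦ u * conj c - β * ∑ i, log (1 - u / y i)`, which is holomorphic on the disc `‖u‖ < b`:
there `1 - u / y i` lies in the right half-plane. Its complex derivative is
`conj c + β * ∑ i, (y i - u)⁻¹`. Expanding each `(y i - u)⁻¹` in powers of `u / y i`, up to order
`ℓ₀ - 1` with an explicit remainder, bounds this derivative on the disc by the right-hand side.
The complex mean value inequality on the convex disc then bounds the difference quotient.
-/

open Finset Complex

theorem inv_sub_eq_sum_add_mul_pow {K : Type*} [Field K] {u y : K} (hy : y ≠ 0)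
    (hyu : y - u ≠ 0) (n : ℕ) :
    (y - u)⁻¹ = ∑ k ∈ range n, u ^ k * y⁻¹ ^ (k + 1) + (u * y⁻¹) ^ n * (y - u)⁻¹ := by
  induction n with
  | zero => simp
  | succ n ih =>
    have step : (u * y⁻¹) ^ n * (y - u)⁻¹
        = u ^ n * y⁻¹ ^ (n + 1) + (u * y⁻¹) ^ (n + 1) * (y - u)⁻¹ := by
      linear_combination (u * y⁻¹) ^ n * y⁻¹ * mul_inv_cancel₀ hyu
        - (u * y⁻¹) ^ n * (y - u)⁻¹ * mul_inv_cancel₀ hy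
    nth_rewrite 1 [ih]
    rw [step, sum_range_succ, add_assoc]

theorem sum_inv_sub_eq_sum_add {K ι : Type*} [Field K] [Fintype ι] {u : K} {y : ι → K}
    (hy : ∀ i, y i ≠ 0) (hyu : ∀ i, y i ≠ u) (n : ℕ) :
    ∑ i, (y i - u)⁻¹ = ∑ k ∈ range n, u ^ k * ∑ i, (y i)⁻¹ ^ (k + 1)
      + ∑ i, (u * (y i)⁻¹) ^ n * (y i - u)⁻¹ := by
  simp_rw [mul_sum]
  rw [sum_comm, ← sum_add_distrib]
  exact sum_congr rfl fun i _ => inv_sub_eq_sum_add_mul_pow (hy i) (sub_ne_zero.2 (hyu i)) n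

theorem norm_mul_inv_pow_mul_inv_sub_le {𝕜 : Type*} [NormedField 𝕜] {u y : 𝕜} {b : ℝ}
    (hu : ‖u‖ ≤ b) (hy : b < ‖y‖) (m : ℕ) :
    ‖(u * y⁻¹) ^ m * (y - u)⁻¹‖ ≤ b ^ m / (‖y‖ ^ m * (‖y‖ - b)) := by
  have hyb : 0 < ‖y‖ - b := sub_pos.2 hy
  have hdist : ‖y‖ - b ≤ ‖y - u‖ := by linarith [norm_sub_norm_le y u]
  rw [norm_mul, norm_pow, norm_mul, norm_inv, norm_inv, div_eq_mul_inv, mul_inv, ← inv_pow,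
    mul_pow, mul_assoc]
  gcongr
  exact pow_nonneg ((norm_nonneg u).trans hu) m

theorem pow_div_pow_mul_sub_le {b Y : ℝ} (hb : 0 < b) (hbY : b < Y) (m : ℕ) :
    b ^ m / (Y ^ m * (Y - b)) ≤ (m + 1) / b * (b ^ (m + 1) / (Y ^ (m + 1) - b ^ (m + 1))) := by
  have hY : 0 < Y := hb.trans hbY
  have hpow : b ^ (m + 1) < Y ^ (m + 1) := pow_lt_pow_left₀ hbY hb.le m.succ_ne_zero
  have hmvt : Y ^ (m + 1) - b ^ (m + 1) ≤ (Y - b) * (m + 1) * Y ^ m := by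
    have := abs_pow_sub_pow_le Y b (m + 1)
    rwa [abs_of_pos (sub_pos.2 hpow), abs_of_pos (sub_pos.2 hbY), abs_of_pos hY,
      abs_of_pos hb, max_eq_left hbY.le, Nat.add_sub_cancel, Nat.cast_succ] at this
  rw [div_mul_div_comm, div_le_div_iff₀ (mul_pos (pow_pos hY m) (sub_pos.2 hbY))
    (mul_pos hb (sub_pos.2 hpow))]
  calc b ^ m * (b * (Y ^ (m + 1) - b ^ (m + 1)))
      ≤ b ^ m * (b * ((Y - b) * (m + 1) * Y ^ m)) := by gcongr
    _ = (m + 1) * b ^ (m + 1) * (Y ^ m * (Y - b)) := by ring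

theorem norm_add_mul_sum_inv_sub_le {ι : Type*} [Fintype ι] (a : ℂ) (β : ℝ) {b : ℝ} (hb : 0 < b)
    {ℓ₀ : ℕ} (hℓ₀ : 2 ≤ ℓ₀) {y : ι → ℂ} (hy : ∀ i, b < ‖y i‖) {u : ℂ} (hu : ‖u‖ ≤ b) :
    ‖a + β * ∑ i, (y i - u)⁻¹‖
      ≤ ‖(β : ℂ) * ∑ i, (y i)⁻¹ + a‖
        + max 1 b ^ ℓ₀ * ∑ ℓ ∈ Ico 2 ℓ₀, ‖(β : ℂ) * ∑ i, (y i)⁻¹ ^ ℓ‖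
        + |β| * ℓ₀ / b * ∑ i, b ^ ℓ₀ / (‖y i‖ ^ ℓ₀ - b ^ ℓ₀) := by
  obtain ⟨n, rfl⟩ : ∃ n, ℓ₀ = n + 2 := ⟨ℓ₀ - 2, by omega⟩
  have hy0 : ∀ i, y i ≠ 0 := fun i => norm_pos_iff.1 (hb.trans (hy i))
  have hyu : ∀ i, y i ≠ u := fun i h => by linarith [h ▸ hy i]
  set S : ℕ → ℂ := fun ℓ => (β : ℂ) * ∑ i, (y i)⁻¹ ^ ℓ
  have hsplit : a + β * ∑ i, (y i - u)⁻¹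
      = ((β : ℂ) * ∑ i, (y i)⁻¹ + a) + ∑ k ∈ range n, u ^ (k + 1) * S (k + 2)
        + β * ∑ i, (u * (y i)⁻¹) ^ (n + 1) * (y i - u)⁻¹ := by
    have hterm : ∀ k, (β : ℂ) * (u ^ (k + 1) * ∑ i, (y i)⁻¹ ^ (k + 1 + 1))
        = u ^ (k + 1) * S (k + 2) := fun k => mul_left_comm _ _ _
    rw [sum_inv_sub_eq_sum_add hy0 hyu (n + 1), sum_range_succ', mul_add, mul_add, mul_sum]
    simp only [hterm, pow_zero, zero_add, pow_one, one_mul]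
    ring
  have hmiddle : ‖∑ k ∈ range n, u ^ (k + 1) * S (k + 2)‖
      ≤ max 1 b ^ (n + 2) * ∑ ℓ ∈ Ico 2 (n + 2), ‖S ℓ‖ := by
    rw [sum_Ico_eq_sum_range, Nat.add_sub_cancel, mul_sum]
    refine (norm_sum_le _ _).trans (sum_le_sum fun k hk => ?_)
    rw [norm_mul, norm_pow, add_comm 2 k]
    gcongr
    calc ‖u‖ ^ (k + 1) ≤ max 1 b ^ (k + 1) := by gcongr; exact hu.trans (le_max_right 1 b)
      _ ≤ max 1 b ^ (n + 2) := pow_le_pow_right₀ (le_max_left 1 b) (by simp at hk; omega)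
  have htail : ‖(β : ℂ) * ∑ i, (u * (y i)⁻¹) ^ (n + 1) * (y i - u)⁻¹‖
      ≤ |β| * ↑(n + 2) / b * ∑ i, b ^ (n + 2) / (‖y i‖ ^ (n + 2) - b ^ (n + 2)) := by
    rw [norm_mul, Complex.norm_real, Real.norm_eq_abs, mul_div_assoc, mul_assoc, mul_sum]
    gcongr
    refine (norm_sum_le _ _).trans (sum_le_sum fun i _ => ?_)
    calc _ ≤ b ^ (n + 1) / (‖y i‖ ^ (n + 1) * (‖y i‖ - b)) :=
          norm_mul_inv_pow_mul_inv_sub_le hu (hy i) (n + 1)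
      _ ≤ _ := by
          have := pow_div_pow_mul_sub_le hb (hy i) (n + 1)
          push_cast at this ⊢
          rwa [add_assoc, one_add_one_eq_two] at this
  rw [hsplit]
  exact norm_add₃_le.trans (by gcongr)

section Potential

variable {ι : Type*} [Fintype ι]

noncomputable def compensatedPotential (β : ℝ) (c : ℂ) (y : ι → ℂ) (u : ℂ) : ℝ :=
  (∑ i, (-β * Real.log (‖u - y i‖))) + (u * (starRingEnd ℂ) c).re

noncomputable def complexPotential (β : ℝ) (c : ℂ) (y : ι → ℂ) (u : ℂ) : ℂ :=
  u * (starRingEnd ℂ) c - β * ∑ i, log (1 - u / y i)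

theorem re_complexPotential (β : ℝ) (c : ℂ) {y : ι → ℂ} {u : ℂ} (hy : ∀ i, y i ≠ 0)
    (hu : ∀ i, u ≠ y i) :
    (complexPotential β c y u).re = compensatedPotential β c y u + β * ∑ i, Real.log ‖y i‖ := by
  have hlog (i : ι) : (log (1 - u / y i)).re = Real.log ‖u - y i‖ - Real.log ‖y i‖ := by
    rw [log_re, one_sub_div (hy i), norm_div, norm_sub_rev,
      Real.log_div (norm_ne_zero_iff.2 (sub_ne_zero.2 (hu i))) (norm_ne_zero_iff.2 (hy i))]
  simp only [complexPotential, compensatedPotential, sub_re, re_ofReal_mul, re_sum, hlog,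
    mul_sub, sum_sub_distrib, mul_sum, neg_mul, sum_neg_distrib]
  ring

theorem hasDerivAt_complexPotential (β : ℝ) (c : ℂ) {y : ι → ℂ} {u : ℂ}
    (hu : ∀ i, ‖u‖ < ‖y i‖) :
    HasDerivAt (complexPotential β c y) ((starRingEnd ℂ) c + β * ∑ i, (y i - u)⁻¹) u := by
  have hlog (i : ι) : HasDerivAt (fun v => log (1 - v / y i)) (-(y i - u)⁻¹) u := by
    have hy : y i ≠ 0 := norm_pos_iff.1 ((norm_nonneg u).trans_lt (hu i))
    have hyu : y i - u ≠ 0 := sub_ne_zero.2 fun h => (h ▸ hu i).false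
    have hslit : 1 - u / y i ∈ slitPlane := by
      rw [sub_eq_add_neg]
      refine mem_slitPlane_of_norm_lt_one ?_
      rw [norm_neg, norm_div, div_lt_one (norm_pos_iff.2 hy)]
      exact hu i
    convert (((hasDerivAt_id' u).div_const (y i)).const_sub 1).clog hslit using 1
    rw [one_sub_div hy]
    field_simp
  have h := (hasDerivAt_mul_const ((starRingEnd ℂ) c)).sub
    ((HasDerivAt.fun_sum fun i (_ : i ∈ univ) => hlog i).const_mul (β : ℂ))
  exact h.congr_deriv (by rw [sum_neg_distrib]; ring)

end Potential

/-- Uniform Lipschitz (difference-quotient) estimate for the compensated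
logarithmic interaction: there exist constants `C₁, C₂ ≥ 0` (depending only on
`β, b, ℓ₀`) such that for every compensation constant `c`, every finite family
of exterior points `y_i` with `|y_i| > b`, and all `x ≠ w` in the disc of
radius `b`, the compensated potential
`Ψ̃(u) = Σ_i (-β log|u - y_i|) + Re[u·conj(c)]` satisfies
`|Ψ̃(x) - Ψ̃(w)|/|x - w| ≤ |β Σ_i y_i⁻¹ + conj c| + C₁ Σ_{ℓ=2}^{ℓ₀-1} |β Σ_i y_i^{-ℓ}|
  + C₂ Σ_i b^{ℓ₀}/(|y_i|^{ℓ₀} - b^{ℓ₀})`. -/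
theorem compensated_log_potential_lipschitz_estimate
    (β b : ℝ) (hb : 0 < b) (ℓ₀ : ℕ) (hℓ₀ : 2 ≤ ℓ₀) :
    ∃ C₁ C₂ : ℝ, 0 ≤ C₁ ∧ 0 ≤ C₂ ∧
      ∀ (c : ℂ) (N : ℕ) (y : Fin N → ℂ), (∀ i, b < ‖y i‖) →
        ∀ x w : ℂ, ‖x‖ < b → ‖w‖ < b → x ≠ w →
          |((∑ i, (-β * Real.log (‖x - y i‖)))
              + (x * (starRingEnd ℂ) c).re)
            - ((∑ i, (-β * Real.log (‖w - y i‖)))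
              + (w * (starRingEnd ℂ) c).re)| / ‖x - w‖
          ≤ ‖(β : ℂ) * ∑ i, (y i)⁻¹ + (starRingEnd ℂ) c‖
            + C₁ * ∑ ℓ ∈ Finset.Ico 2 ℓ₀,
                ‖(β : ℂ) * ∑ i, ((y i)⁻¹) ^ ℓ‖
            + C₂ * ∑ i, b ^ ℓ₀ / (‖y i‖ ^ ℓ₀ - b ^ ℓ₀) := by
  refine ⟨max 1 b ^ ℓ₀, |β| * ℓ₀ / b, by positivity, by positivity, ?_⟩
  intro c N y hy x w hx hw hxw
  have hdisc (u : ℂ) (hu : ‖u‖ < b) (i : Fin N) : ‖u‖ < ‖y i‖ := hu.trans (hy i)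
  have hre (u : ℂ) (hu : ‖u‖ < b) : (complexPotential β c y u).re
      = compensatedPotential β c y u + β * ∑ i, Real.log ‖y i‖ := re_complexPotential β c
    (fun i => norm_pos_iff.1 ((norm_nonneg u).trans_lt (hdisc u hu i)))
    (fun i h => (h ▸ hdisc u hu i).false)
  have hlip := (convex_ball (0 : ℂ) b).norm_image_sub_le_of_norm_hasDerivWithin_le
    (fun u hu =>
      (hasDerivAt_complexPotential β c (hdisc u (mem_ball_zero_iff.1 hu))).hasDerivWithinAt)
    (fun u hu => norm_add_mul_sum_inv_sub_le _ β hb hℓ₀ hy (mem_ball_zero_iff.1 hu).le)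
    (mem_ball_zero_iff.2 hw) (mem_ball_zero_iff.2 hx)
  change |compensatedPotential β c y x - compensatedPotential β c y w| / ‖x - w‖ ≤ _
  rw [div_le_iff₀ (norm_pos_iff.2 (sub_ne_zero.2 hxw))]
  calc |compensatedPotential β c y x - compensatedPotential β c y w|
      = |(complexPotential β c y x - complexPotential β c y w).re| := by
        rw [sub_re, hre x hx, hre w hw, add_sub_add_right_eq_sub]
    _ ≤ ‖complexPotential β c y x - complexPotential β c y w‖ := abs_re_le_norm _
    _ ≤ _ := hlip
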